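/- arXiv:1004.4634 — 3 statements merged into one kernel-verified Lean document; each statement's English description precedes it below -/
import Mathlib

section
/- For any associative algebra A over ℂ, the characters (traces) of pairwise nonisomorphic irreducible finite-dimensional representations of A induce linearly independent linear functionals on the quotient A/[A,A]. -/
/-!
Since the `V i` are simple and pairwise nonisomorphic, every `A`-endomorphism of `Π i, V i`
preserves each summand, so the projection onto `V j` commutes with all of them. Jacobson density
then realises this projection by some `a : A`, which acts as the identity on `V j` and as zero on
the other `V i`. The character of `V i` at `a` is `δ i j · dim V j`, and these nonzero diagonal
values force linear independence.
-/

open Module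

theorem linearIndependent_of_apply_eq_zero_of_ne {K W ι : Type*} [CommRing K] [IsDomain K]
    [AddCommGroup W] [Module K W] {φ : ι → W →ₗ[K] K} (w : ι → W)
    (hdiag : ∀ i, φ i (w i) ≠ 0) (hoff : ∀ i j, i ≠ j → φ i (w j) = 0) :
    LinearIndependent K φ := by
  classical
  rw [linearIndependent_iff']
  intro s c hc j hj
  have hsum := LinearMap.congr_fun hc (w j)
  rw [LinearMap.sum_apply, Finset.sum_eq_single_of_mem j hj fun i _ hij => by
    simp [hoff i j hij]] at hsum
  simpa [hdiag j] using hsum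

section PiSimple

variable {R ι : Type*} [Ring R] [DecidableEq ι] {M : ι → Type*} [∀ i, AddCommGroup (M i)]
  [∀ i, Module R (M i)] [∀ i, IsSimpleModule R (M i)]
  (hnoniso : ∀ i j, i ≠ j → IsEmpty (M i ≃ₗ[R] M j))
include hnoniso

theorem apply_single_apply_eq_zero_of_ne (g : End R (Π i, M i)) {i k : ι} (hik : i ≠ k)
    (x : M i) : g (Pi.single i x) k = 0 := by
  by_contra hne
  have hcomp : LinearMap.proj k ∘ₗ g ∘ₗ LinearMap.single R M i ≠ 0 :=
    fun h => hne (by simpa using LinearMap.congr_fun h x)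
  exact (hnoniso i k hik).false (.ofBijective _ (LinearMap.bijective_of_ne_zero hcomp))

theorem single_apply_map_eq_map_single_apply [Finite ι] (g : End R (Π i, M i)) (j : ι)
    (m : Π i, M i) : Pi.single j (g m j) = g (Pi.single j (m j)) := by
  let projJ : End R (Π i, M i) := LinearMap.single R M j ∘ₗ LinearMap.proj j
  change (projJ ∘ₗ g) m = (g ∘ₗ projJ) m
  congr 1
  refine LinearMap.pi_ext' fun i => LinearMap.ext fun x => funext fun k => ?_
  rcases eq_or_ne i j with rfl | hij
  · rcases eq_or_ne k i with rfl | hki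
    · simp [projJ]
    · simp [projJ, Pi.single_eq_of_ne hki,
        apply_single_apply_eq_zero_of_ne hnoniso g hki.symm]
  · simp [projJ, apply_single_apply_eq_zero_of_ne hnoniso g hij, Pi.single_eq_of_ne hij.symm]

theorem exists_smul_eq_single_apply [Finite ι] [Module.Finite (End R (Π i, M i)) (Π i, M i)]
    (j : ι) : ∃ r : R, ∀ m : Π i, M i, r • m = Pi.single j (m j) := by
  let projJ : End (End R (Π i, M i)) (Π i, M i) :=
    { toFun := fun m => Pi.single j (m j)
      map_add' := fun m m' => by simp [Pi.single_add]
      map_smul' := fun g m => single_apply_map_eq_map_single_apply hnoniso g j m }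
  obtain ⟨r, hr⟩ := Module.Finite.toModuleEnd_moduleEnd_surjective projJ
  exact ⟨r, fun m => LinearMap.congr_fun hr m⟩

theorem exists_smul_eq_self_and_smul_eq_zero (K : Type*) [CommSemiring K] [Algebra K R]
    [∀ i, Module K (M i)] [∀ i, IsScalarTower K R (M i)] [∀ i, Module.Finite K (M i)]
    [Finite ι] (j : ι) :
    ∃ r : R, (∀ v : M j, r • v = v) ∧ ∀ i, i ≠ j → ∀ v : M i, r • v = 0 := by
  have : Module.Finite (End R (Π i, M i)) (Π i, M i) :=
    .of_restrictScalars_finite K _ _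
  obtain ⟨r, hr⟩ := exists_smul_eq_single_apply hnoniso j
  refine ⟨r, fun v => ?_, fun i hij v => ?_⟩
  · simpa using congr_fun (hr (Pi.single j v)) j
  · simpa [Pi.single_eq_of_ne hij] using congr_fun (hr (Pi.single i v)) i

end PiSimple

theorem stmt_0_general (A : Type*) [Ring A] [Algebra ℂ A] (n : ℕ)
    (V : Fin n → Type*) [∀ i, AddCommGroup (V i)] [∀ i, Module ℂ (V i)]
    [∀ i, Module A (V i)] [∀ i, IsScalarTower ℂ A (V i)]
    [∀ i, FiniteDimensional ℂ (V i)]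
    (hsimple : ∀ i, IsSimpleModule A (V i))
    (hnoniso : ∀ i j, i ≠ j → IsEmpty (V i ≃ₗ[A] V j))
    (C : Submodule ℂ A)
    (φ : Fin n → (A ⧸ C) →ₗ[ℂ] ℂ)
    (hφ : ∀ i (a : A), φ i (Submodule.Quotient.mk a) =
      LinearMap.trace ℂ (V i) (DistribMulAction.toLinearMap ℂ (V i) a)) :
    LinearIndependent ℂ φ := by
  choose a ha_self ha_zero using exists_smul_eq_self_and_smul_eq_zero hnoniso ℂ
  refine linearIndependent_of_apply_eq_zero_of_ne (fun j => Submodule.Quotient.mk (a j))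
    (fun j => ?_) (fun i j hij => ?_)
  · have hid : DistribMulAction.toLinearMap ℂ (V j) (a j) = LinearMap.id :=
      LinearMap.ext (ha_self j)
    have : Nontrivial (V j) := IsSimpleModule.nontrivial A (V j)
    rw [hφ, hid, LinearMap.trace_id]
    exact_mod_cast Module.finrank_pos.ne'
  · have hzero : DistribMulAction.toLinearMap ℂ (V i) (a j) = 0 :=
      LinearMap.ext (ha_zero j i hij)
    rw [hφ, hzero, map_zero]

/-- Characters (traces) of pairwise nonisomorphic irreducible finite-dimensional
representations of an associative `ℂ`-algebra `A` induce linearly independent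
linear functionals on `A/[A,A]`. -/
theorem stmt_0 (A : Type*) [Ring A] [Algebra ℂ A] (n : ℕ)
    (V : Fin n → Type*) [∀ i, AddCommGroup (V i)] [∀ i, Module ℂ (V i)]
    [∀ i, Module A (V i)] [∀ i, IsScalarTower ℂ A (V i)]
    [∀ i, SMulCommClass A ℂ (V i)]
    [∀ i, FiniteDimensional ℂ (V i)]
    (hsimple : ∀ i, IsSimpleModule A (V i))
    (hnoniso : ∀ i j, i ≠ j → IsEmpty (V i ≃ₗ[A] V j))
    (C : Submodule ℂ A)
    (hC : C = Submodule.span ℂ {x : A | ∃ a b : A, x = a * b - b * a})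
    (φ : Fin n → (A ⧸ C) →ₗ[ℂ] ℂ)
    (hφ : ∀ i (a : A), φ i (Submodule.Quotient.mk a) =
      LinearMap.trace ℂ (V i) (DistribMulAction.toLinearMap ℂ (V i) a)) :
    LinearIndependent ℂ φ :=
  stmt_0_general A n V hsimple hnoniso C φ hφ
end

section
/- If A is an associative ℂ-algebra with dim(A/[A,A]) = n finite, then A has at most n isomorphism classes of irreducible finite-dimensional representations. -/
/-!
The trace characters `a ↦ tr (a | V)` vanish on commutators, so they factor through `A/[A,A]`.
They are linearly independent for pairwise nonisomorphic simple finite-dimensional `V i`: by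
Schur's lemma every `A`-endomorphism of `Π i, V i` preserves the factors, so the Jacobson density
theorem yields an `a : A` acting as the identity on `V i` and as zero on every other `V j`, and the
characters take the values `dim V i • δ_ij` there. Hence `m ≤ dim (A/[A,A])^* = n`.
-/

open Module LinearMap

section Density

variable {A : Type*} [Ring A] {ι : Type*} [DecidableEq ι] {V : ι → Type*}
  [∀ i, AddCommGroup (V i)] [∀ i, Module A (V i)] [∀ i, IsSimpleModule A (V i)]

lemma apply_single_apply_eq_zero_of_ne_s1
    (hnoniso : ∀ i j, i ≠ j → IsEmpty (V i ≃ₗ[A] V j))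
    (g : (Π i, V i) →ₗ[A] Π i, V i) {i j : ι} (hij : i ≠ j) (w : V i) :
    g (Pi.single i w) j = 0 := by
  rcases (proj j ∘ₗ g ∘ₗ single A V i).bijective_or_eq_zero with hbij | hzero
  · exact ((hnoniso i j hij).false (.ofBijective _ hbij)).elim
  · exact congr($hzero w)

lemma apply_single_proj_eq_single_apply [Fintype ι]
    (hnoniso : ∀ i j, i ≠ j → IsEmpty (V i ≃ₗ[A] V j))
    (g : (Π i, V i) →ₗ[A] Π i, V i) (i : ι) (v : Π i, V i) :
    g (Pi.single i (v i)) = Pi.single i (g v i) := by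
  have hoff {j k : ι} (hjk : j ≠ k) (w : V j) : g (Pi.single j w) k = 0 :=
    apply_single_apply_eq_zero_of_ne_s1 hnoniso g hjk w
  have hv : g v i = g (Pi.single i (v i)) i := by
    conv_lhs => rw [← Finset.univ_sum_single v]
    rw [map_sum, Finset.sum_apply, Finset.sum_eq_single i (fun j _ hj => hoff hj (v j)) (by simp)]
  ext k
  rcases eq_or_ne k i with rfl | hk
  · simp [hv]
  · simp [hk, hoff hk.symm]

lemma exists_smul_eq_single_apply_s1 [Fintype ι] (K : Type*) [CommSemiring K]
    [∀ i, Module K (V i)] [∀ i, SMulCommClass A K (V i)] [∀ i, Module.Finite K (V i)]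
    (hnoniso : ∀ i j, i ≠ j → IsEmpty (V i ≃ₗ[A] V j)) (i : ι) :
    ∃ a : A, ∀ v : Π i, V i, a • v = Pi.single i (v i) := by
  let f : End (End A (Π i, V i)) (Π i, V i) :=
    { toFun v := Pi.single i (v i)
      map_add' v w := Pi.single_add i (v i) (w i)
      map_smul' g v := (apply_single_proj_eq_single_apply hnoniso g i v).symm }
  obtain ⟨s, hs⟩ := Module.Finite.fg_top (R := K) (M := Π i, V i)
  obtain ⟨a, ha⟩ := jacobson_density f s
  have : DistribSMul.toLinearMap K _ a = single K V i ∘ₗ proj i :=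
    ext_on hs fun v hv => (ha v hv).symm
  exact ⟨a, fun v => congr($this v)⟩

end Density

section Character

variable (K A : Type*) [Field K] [Ring A] [Algebra K A]
  (V : Type*) [AddCommGroup V] [Module K V] [Module A V] [IsScalarTower K A V]

noncomputable def character : A →ₗ[K] K :=
  trace K V ∘ₗ (Algebra.lsmul K K V).toLinearMap

variable {K A V}

lemma character_apply (a : A) : character K A V a = trace K V (Algebra.lsmul K K V a) := rfl

lemma character_mul_comm (a b : A) : character K A V (a * b) = character K A V (b * a) := by
  simp only [character_apply, map_mul, trace_mul_comm]

lemma span_commutators_le_ker_character :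
    Submodule.span K {x : A | ∃ a b : A, x = a * b - b * a} ≤ ker (character K A V) := by
  rw [Submodule.span_le]
  rintro _ ⟨a, b, rfl⟩
  simp [character_mul_comm a b]

lemma character_eq_finrank_of_forall_smul_eq_self [FiniteDimensional K V] {a : A}
    (ha : ∀ v : V, a • v = v) :
    character K A V a = finrank K V := by
  rw [character_apply, show Algebra.lsmul K K V a = LinearMap.id from LinearMap.ext ha,
    trace_id]

lemma character_eq_zero_of_forall_smul_eq_zero {a : A} (ha : ∀ v : V, a • v = 0) :
    character K A V a = 0 := by
  rw [character_apply, show Algebra.lsmul K K V a = 0 from LinearMap.ext ha, map_zero]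

end Character

theorem linearIndependent_character {K A : Type*} [Field K] [CharZero K] [Ring A] [Algebra K A]
    {ι : Type*} [Fintype ι] {V : ι → Type*} [∀ i, AddCommGroup (V i)] [∀ i, Module K (V i)]
    [∀ i, Module A (V i)] [∀ i, IsScalarTower K A (V i)]
    [∀ i, FiniteDimensional K (V i)] [∀ i, IsSimpleModule A (V i)]
    (hnoniso : ∀ i j, i ≠ j → IsEmpty (V i ≃ₗ[A] V j)) :
    LinearIndependent K fun i => character K A (V i) := by
  classical
  refine Fintype.linearIndependent_iff.mpr fun c hc i => ?_
  obtain ⟨a, ha⟩ := exists_smul_eq_single_apply_s1 K hnoniso i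
  have hself (w : V i) : a • w = w := by simpa using congr_fun (ha (Pi.single i w)) i
  have hzero (j : ι) (hj : j ≠ i) (w : V j) : a • w = 0 := by
    simpa [hj] using congr_fun (ha (Pi.single j w)) j
  have hdim : (finrank K (V i) : K) ≠ 0 := by
    have := IsSimpleModule.nontrivial A (V i)
    exact Nat.cast_ne_zero.mpr finrank_pos.ne'
  have := congr($hc a)
  rw [LinearMap.sum_apply, Finset.sum_eq_single i
    (fun j _ hj => by simp [character_eq_zero_of_forall_smul_eq_zero (hzero j hj)])
    (by simp)] at this
  simpa [character_eq_finrank_of_forall_smul_eq_self hself, hdim] using this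

theorem stmt_1_general (A : Type*) [Ring A] [Algebra ℂ A]
    (C : Submodule ℂ A)
    (hC : C = Submodule.span ℂ {x : A | ∃ a b : A, x = a * b - b * a})
    (n : ℕ) [FiniteDimensional ℂ (A ⧸ C)] (hn : Module.finrank ℂ (A ⧸ C) = n)
    (m : ℕ) (V : Fin m → Type*) [∀ i, AddCommGroup (V i)] [∀ i, Module ℂ (V i)]
    [∀ i, Module A (V i)] [∀ i, IsScalarTower ℂ A (V i)]
    [∀ i, FiniteDimensional ℂ (V i)]
    (hsimple : ∀ i, IsSimpleModule A (V i))
    (hnoniso : ∀ i j, i ≠ j → IsEmpty (V i ≃ₗ[A] V j)) :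
    m ≤ n := by
  let χ (i : Fin m) : Dual ℂ (A ⧸ C) :=
    C.liftQ (character ℂ A (V i)) (hC ▸ span_commutators_le_ker_character)
  have hχ : LinearIndependent ℂ χ :=
    LinearIndependent.of_comp C.mkQ.dualMap (linearIndependent_character hnoniso)
  simpa [hn, Subspace.dual_finrank_eq] using hχ.fintype_card_le_finrank

/-- If `dim (A/[A,A]) = n` is finite, then `A` has at most `n` isomorphism classes of
irreducible finite-dimensional representations: any family of pairwise nonisomorphic
irreducible finite-dimensional `A`-modules has at most `n` members. -/
theorem stmt_1 (A : Type*) [Ring A] [Algebra ℂ A]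
    (C : Submodule ℂ A)
    (hC : C = Submodule.span ℂ {x : A | ∃ a b : A, x = a * b - b * a})
    (n : ℕ) [FiniteDimensional ℂ (A ⧸ C)] (hn : Module.finrank ℂ (A ⧸ C) = n)
    (m : ℕ) (V : Fin m → Type*) [∀ i, AddCommGroup (V i)] [∀ i, Module ℂ (V i)]
    [∀ i, Module A (V i)] [∀ i, IsScalarTower ℂ A (V i)]
    [∀ i, SMulCommClass A ℂ (V i)]
    [∀ i, FiniteDimensional ℂ (V i)]
    (hsimple : ∀ i, IsSimpleModule A (V i))
    (hnoniso : ∀ i j, i ≠ j → IsEmpty (V i ≃ₗ[A] V j)) :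
    m ≤ n :=
  stmt_1_general A C hC n hn m V hsimple hnoniso
end

section
/- Let A be an associative ℂ-algebra that is a finitely generated module over a central subalgebra Z isomorphic to a polynomial ring. Suppose that for a Zariski-dense set of characters η: Z → ℂ the quotient A/(ker η)A has dimension of HH₀ equal to d, and for all characters the dimension of HH₀(A/(ker η)A) is at most d. Then dim HH₀(A/(ker η)A) = d for every character η: Z → ℂ. -/
/-!
Pick a finite generating set `s` of `A` over `ℂ[x]`, so that `ψ : ℂ[x]^s → A`,
`g ↦ ∑ ζ (g i) * i`, is onto. Then `A ⧸ N v ≅ ℂ^s ⧸ ev_v(M)` with `M = ψ⁻¹(C)`, so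
`dim (A ⧸ N v) = #s - rank ev_v(M)`. This rank is lower semicontinuous in `v`: rank `t` at `v₁`
is witnessed by a determinant, a polynomial that is nonzero at `v₁` and hence does not vanish
identically on the Zariski-dense set `S`. So `dim (A ⧸ N v₁)` is at least the value `d` it takes
at some point of `S`, and the a priori bound gives equality.
-/

open Module

namespace Submodule

variable {K V W U : Type*} [Ring K] [AddCommGroup V] [Module K V] [AddCommGroup W] [Module K W]
  [AddCommGroup U] [Module K U]

theorem comap_map_ker_sup_eq {f : V →ₗ[K] W} (hf : Function.Surjective f) (g : V →ₗ[K] U)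
    (P : Submodule K W) :
    ((LinearMap.ker g).map f ⊔ P).comap f = ((P.comap f).map g).comap g := by
  rw [← map_comap_eq_of_surjective hf P, ← map_sup, comap_map_eq, comap_map_eq,
    map_comap_eq_of_surjective hf, sup_comm (P.comap f),
    sup_eq_left.mpr ((LinearMap.ker_le_comap f).trans le_sup_right)]

noncomputable def quotientMapKerSupEquiv {f : V →ₗ[K] W} (hf : Function.Surjective f)
    {g : V →ₗ[K] U} (hg : Function.Surjective g) (P : Submodule K W) :
    (W ⧸ (LinearMap.ker g).map f ⊔ P) ≃ₗ[K] U ⧸ (P.comap f).map g :=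
  (((mkQ _).comp f).quotKerEquivOfSurjective ((mkQ_surjective _).comp hf)).symm ≪≫ₗ
    quotEquivOfEq _ _ (by rw [LinearMap.ker_comp, ker_mkQ, LinearMap.ker_comp, ker_mkQ,
      comap_map_ker_sup_eq hf]) ≪≫ₗ
    ((mkQ _).comp g).quotKerEquivOfSurjective ((mkQ_surjective _).comp hg)

end Submodule

namespace Matrix

variable {K : Type*} [Field K] {m n : Type*} [Fintype m] [Fintype n] [DecidableEq m]

theorem exists_mul_eq_one_of_linearIndependent_row {A : Matrix m n K}
    (hA : LinearIndependent K A.row) : ∃ B : Matrix n m K, A * B = 1 := by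
  refine mulVec_surjective_iff_exists_right_inverse.mp ?_
  have hrank : finrank K (LinearMap.range A.mulVecLin) = finrank K (m → K) := by
    rw [← Matrix.rank, rank_eq_finrank_span_row, finrank_span_eq_card hA,
      finrank_fintype_fun_eq_card]
  exact LinearMap.range_eq_top.mp (Submodule.eq_top_of_finrank_eq hrank)

theorem linearIndependent_row_of_det_mul_ne_zero {A : Matrix m n K} {B : Matrix n m K}
    (h : (A * B).det ≠ 0) : LinearIndependent K A.row := by
  have hAB : LinearIndependent K (A * B).row :=
    linearIndependent_rows_of_isUnit ((isUnit_iff_isUnit_det _).mpr (isUnit_iff_ne_zero.mpr h))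
  exact LinearIndependent.of_comp B.vecMulLinear hAB

end Matrix

namespace MvPolynomial

variable {K σ : Type*} [Field K] (ι : Type*)

noncomputable def evalVec (v : σ → K) : (ι → MvPolynomial σ K) →ₗ[K] ι → K :=
  (aeval v).toLinearMap.compLeft ι

variable {ι}

@[simp]
theorem evalVec_apply (v : σ → K) (g : ι → MvPolynomial σ K) (i : ι) :
    evalVec ι v g i = eval v (g i) :=
  rfl

theorem evalVec_surjective (v : σ → K) : Function.Surjective (evalVec ι v) :=
  fun c => ⟨fun i => C (c i), by ext i; simp⟩

variable [Fintype ι]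

theorem exists_mem_finrank_map_evalVec_le (M : Submodule K (ι → MvPolynomial σ K))
    {S : Set (σ → K)} (hS : ∀ p : MvPolynomial σ K, (∀ v ∈ S, eval v p = 0) → p = 0)
    (v₁ : σ → K) :
    ∃ v ∈ S, finrank K (M.map (evalVec ι v₁)) ≤ finrank K (M.map (evalVec ι v)) := by
  set t := finrank K (M.map (evalVec ι v₁))
  let b := Module.finBasis K (M.map (evalVec ι v₁))
  choose G hGM hGb using fun j => (b j).2
  let P : Matrix (Fin t) ι (MvPolynomial σ K) := Matrix.of G
  have heval : ∀ v, (P.map (eval v)).row = fun j => evalVec ι v (G j) := fun v => rfl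
  obtain ⟨B, hB⟩ : ∃ B : Matrix ι (Fin t) K, P.map (eval v₁) * B = 1 := by
    refine Matrix.exists_mul_eq_one_of_linearIndependent_row ?_
    rw [heval]
    simp only [hGb]
    exact b.linearIndependent.map' (M.map (evalVec ι v₁)).subtype (Submodule.ker_subtype _)
  -- `Δ v = det (P(v) * B)` is polynomial in `v` since `B` is constant, and `Δ v₁ = 1`: it replaces
  -- a maximal minor of `P(v)` that is nonzero at `v₁`.
  let Δ := (P * B.map (C : K →+* MvPolynomial σ K)).det
  have heval_Δ : ∀ v, eval v Δ = (P.map (eval v) * B).det := by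
    intro v
    rw [RingHom.map_det, RingHom.mapMatrix_apply, Matrix.map_mul, Matrix.map_map]
    congr 3
    ext
    simp
  obtain ⟨v, hvS, hΔv⟩ : ∃ v ∈ S, eval v Δ ≠ 0 := by
    by_contra! h
    have := heval_Δ v₁
    rw [hS Δ h, hB, Matrix.det_one, map_zero] at this
    exact zero_ne_one this
  refine ⟨v, hvS, ?_⟩
  have hli := Matrix.linearIndependent_row_of_det_mul_ne_zero ((heval_Δ v).symm ▸ hΔv)
  rw [heval] at hli
  calc t = finrank K (Submodule.span K (Set.range fun j => evalVec ι v (G j))) := by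
        rw [finrank_span_eq_card hli, Fintype.card_fin]
    _ ≤ _ := Submodule.finrank_mono <| Submodule.span_le.mpr <| by
        rintro _ ⟨j, rfl⟩
        exact Submodule.mem_map_of_mem (hGM j)

end MvPolynomial

namespace AlgHom

variable {K R A : Type*} [CommRing K] [CommRing R] [Algebra K R] [Ring A] [Algebra K A]
  (ζ : R →ₐ[K] A) (s : Finset A)

noncomputable def combination : (s → R) →ₗ[K] A :=
  ∑ i : s, LinearMap.mulRight K (i : A) ∘ₗ ζ.toLinearMap ∘ₗ LinearMap.proj i

theorem combination_apply (g : s → R) : ζ.combination s g = ∑ i : s, ζ (g i) * i := by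
  simp [combination]

theorem mul_combination (p : R) (g : s → R) :
    ζ p * ζ.combination s g = ζ.combination s (fun i => p * g i) := by
  simp only [combination_apply, Finset.mul_sum, map_mul, mul_assoc]

variable {ζ s} in
theorem combination_surjective
    (hs : ∀ a : A, a ∈ Submodule.span K {x : A | ∃ (p : R) (b : A), b ∈ s ∧ x = ζ p * b}) :
    Function.Surjective (ζ.combination s) := by
  classical
  rw [← LinearMap.range_eq_top, eq_top_iff]
  refine fun a _ => Submodule.span_le.mpr ?_ (hs a)
  rintro _ ⟨p, b, hb, rfl⟩
  refine ⟨Pi.single ⟨b, hb⟩ p, ?_⟩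
  rw [combination_apply, Finset.sum_eq_single_of_mem _ (Finset.mem_univ _) fun i _ hi => by
    rw [Pi.single_eq_of_ne hi, map_zero, zero_mul]]
  rw [Pi.single_eq_same]

end AlgHom

section

variable {K σ A : Type*} [Field K] [Ring A] [Algebra K A] {ζ : MvPolynomial σ K →ₐ[K] A}
  {s : Finset A}

theorem span_mul_eval_eq_zero_eq_map_ker_evalVec (hζs : Function.Surjective (ζ.combination s))
    (v : σ → K) :
    Submodule.span K {x : A | ∃ (p : MvPolynomial σ K) (a : A),
        MvPolynomial.eval v p = 0 ∧ x = ζ p * a} =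
      (LinearMap.ker (MvPolynomial.evalVec s v)).map (ζ.combination s) := by
  apply le_antisymm
  · rw [Submodule.span_le]
    rintro _ ⟨p, a, hp, rfl⟩
    obtain ⟨g, rfl⟩ := hζs a
    refine ⟨fun i => p * g i, ?_, (ζ.mul_combination s p g).symm⟩
    ext i
    simp [hp]
  · rintro _ ⟨g, hg, rfl⟩
    rw [AlgHom.combination_apply]
    exact Submodule.sum_mem _ fun i _ =>
      Submodule.subset_span ⟨g i, i, congr_fun hg i, rfl⟩

theorem finrank_quotient_add_finrank_map_evalVec (hζs : Function.Surjective (ζ.combination s))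
    (C : Submodule K A) (v : σ → K) :
    finrank K (A ⧸ (LinearMap.ker (MvPolynomial.evalVec s v)).map (ζ.combination s) ⊔ C) +
      finrank K ((C.comap (ζ.combination s)).map (MvPolynomial.evalVec s v)) = s.card := by
  rw [(Submodule.quotientMapKerSupEquiv hζs (MvPolynomial.evalVec_surjective v) C).finrank_eq,
    Submodule.finrank_quotient_add_finrank, finrank_fintype_fun_eq_card, Fintype.card_coe]

end

theorem stmt_15_general (A : Type*) [Ring A] [Algebra ℂ A] (k : ℕ)
    (ζ : MvPolynomial (Fin k) ℂ →ₐ[ℂ] A)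
    (hfg : ∃ s : Finset A, ∀ a : A,
      a ∈ Submodule.span ℂ {x : A | ∃ (p : MvPolynomial (Fin k) ℂ) (b : A),
        b ∈ s ∧ x = ζ p * b})
    (C : Submodule ℂ A)
    (N : (Fin k → ℂ) → Submodule ℂ A)
    (hN : ∀ v : Fin k → ℂ, N v = Submodule.span ℂ
      {x : A | ∃ (p : MvPolynomial (Fin k) ℂ) (a : A),
        MvPolynomial.eval v p = 0 ∧ x = ζ p * a} ⊔ C)
    (d : ℕ)
    (S : Set (Fin k → ℂ))
    (hdense : ∀ p : MvPolynomial (Fin k) ℂ,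
      (∀ v ∈ S, MvPolynomial.eval v p = 0) → p = 0)
    (hgeneric : ∀ v ∈ S, Module.finrank ℂ (A ⧸ N v) = d)
    (hbound : ∀ v : Fin k → ℂ, Module.finrank ℂ (A ⧸ N v) ≤ d) :
    ∀ v : Fin k → ℂ, Module.finrank ℂ (A ⧸ N v) = d := by
  obtain ⟨s, hs⟩ := hfg
  have hζs := AlgHom.combination_surjective hs
  let M := C.comap (ζ.combination s)
  have hrank : ∀ v, finrank ℂ (A ⧸ N v) + finrank ℂ (M.map (MvPolynomial.evalVec s v)) =
      s.card := fun v => by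
    rw [hN, span_mul_eval_eq_zero_eq_map_ker_evalVec hζs]
    exact finrank_quotient_add_finrank_map_evalVec hζs C v
  intro v₁
  obtain ⟨v, hvS, hle⟩ := MvPolynomial.exists_mem_finrank_map_evalVec_le M hdense v₁
  refine le_antisymm (hbound v₁) ?_
  have h₁ := hrank v₁
  have h := hrank v
  rw [hgeneric v hvS] at h
  omega

/-- Let `A` be an associative `ℂ`-algebra, finitely generated as a module over a
central polynomial subalgebra (the image of `ζ`). For a character given by a point
`v`, let `N v = (ker η_v)·A + [A,A]`, so `HH₀(A/(ker η_v)A) = A ⧸ N v`. If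
`dim (A ⧸ N v) = d` on a Zariski-dense set of `v`, and `dim (A ⧸ N v) ≤ d` for all
`v`, then `dim (A ⧸ N v) = d` for every `v`. -/
theorem stmt_15 (A : Type*) [Ring A] [Algebra ℂ A] (k : ℕ)
    (ζ : MvPolynomial (Fin k) ℂ →ₐ[ℂ] A)
    (hinj : Function.Injective ζ)
    (hcentral : ∀ (p : MvPolynomial (Fin k) ℂ) (a : A), ζ p * a = a * ζ p)
    (hfg : ∃ s : Finset A, ∀ a : A,
      a ∈ Submodule.span ℂ {x : A | ∃ (p : MvPolynomial (Fin k) ℂ) (b : A),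
        b ∈ s ∧ x = ζ p * b})
    (C : Submodule ℂ A)
    (hC : C = Submodule.span ℂ {x : A | ∃ a b : A, x = a * b - b * a})
    (N : (Fin k → ℂ) → Submodule ℂ A)
    (hN : ∀ v : Fin k → ℂ, N v = Submodule.span ℂ
      {x : A | ∃ (p : MvPolynomial (Fin k) ℂ) (a : A),
        MvPolynomial.eval v p = 0 ∧ x = ζ p * a} ⊔ C)
    (d : ℕ)
    (S : Set (Fin k → ℂ))
    (hdense : ∀ p : MvPolynomial (Fin k) ℂ,
      (∀ v ∈ S, MvPolynomial.eval v p = 0) → p = 0)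
    (hgeneric : ∀ v ∈ S, Module.finrank ℂ (A ⧸ N v) = d)
    (hbound : ∀ v : Fin k → ℂ, Module.finrank ℂ (A ⧸ N v) ≤ d) :
    ∀ v : Fin k → ℂ, Module.finrank ℂ (A ⧸ N v) = d :=
  stmt_15_general A k ζ hfg C N hN d S hdense hgeneric hbound
end
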